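/- In the setting of the quantitative stability result for relaxed inequality constraints, if moreover F ≡ 0 (so I(μ) = H(μ|ν)), then the unique minimisers μ̄_0 of H(·|ν) over D_I ∩ A^ζ_{Ψ,0} and μ̄_ε over D_I ∩ A^ζ_{Ψ,ε} satisfy H(μ̄_0 | μ̄_ε) ≤ C_stab ε for all ε ∈ [0,ε*], where C_stab is the constant from the quantitative stability estimate 0 ≤ Ī^ζ_{Ψ,0} − Ī^ζ_{Ψ,ε} ≤ C_stab ε. -/

import Mathlib

open MeasureTheory Filter Topology Set
open scoped ENNReal NNReal

noncomputable section

/-- `P_φ(E)`: Borel probability measures with finite `φ`-integral. -/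
structure Pphi (E : Type*) [MeasurableSpace E] (φ : E → ℝ) where
  toPM : MeasureTheory.ProbabilityMeasure E
  finInt : ∫⁻ x, ENNReal.ofReal (φ x) ∂(toPM : MeasureTheory.Measure E) < ⊤

namespace Pphi

variable {E : Type*} [MeasurableSpace E] {φ : E → ℝ}

/-- The underlying measure. -/
def m (μ : Pphi E φ) : Measure E := (μ.toPM : Measure E)

instance (μ : Pphi E φ) : IsProbabilityMeasure μ.m := μ.toPM.prop

/-- The topology of `P_φ(E)`: induced by weak convergence together with convergence of
the `φ`-integrals. -/
instance instTop [TopologicalSpace E] [OpensMeasurableSpace E] :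
    TopologicalSpace (Pphi E φ) :=
  TopologicalSpace.induced (fun μ => ((μ.toPM : ProbabilityMeasure E), ∫ x, φ x ∂μ.m))
    inferInstance

/-- Convex combination `(1-ε)μ + εν` in `P_φ(E)` (junk value `μ` if `ε ∉ [0,1]`). -/
def comb (μ ν : Pphi E φ) (ε : ℝ) : Pphi E φ :=
  if h : 0 ≤ ε ∧ ε ≤ 1 then
    { toPM := ⟨ENNReal.ofReal (1 - ε) • μ.m + ENNReal.ofReal ε • ν.m, by
        constructor
        rw [Measure.add_apply, Measure.smul_apply, Measure.smul_apply, measure_univ,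
          measure_univ, smul_eq_mul, smul_eq_mul, mul_one, mul_one,
          ← ENNReal.ofReal_add (by linarith [h.2]) h.1]
        norm_num⟩
      finInt := by
        show (∫⁻ x, ENNReal.ofReal (φ x)
            ∂(ENNReal.ofReal (1 - ε) • μ.m + ENNReal.ofReal ε • ν.m)) < ⊤
        rw [lintegral_add_measure, lintegral_smul_measure, lintegral_smul_measure]
        exact ENNReal.add_lt_top.mpr
          ⟨ENNReal.mul_lt_top ENNReal.ofReal_lt_top μ.finInt,
           ENNReal.mul_lt_top ENNReal.ofReal_lt_top ν.finInt⟩ }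
  else μ

end Pphi

open scoped Classical in
/-- Relative entropy `H(μ|ν) = ∫ log (dμ/dν) dμ` if `μ ≪ ν` (and the integral exists),
`+∞` otherwise. -/
def relEnt {E : Type*} [MeasurableSpace E] (μ ν : Measure E) : EReal :=
  if μ ≪ ν ∧ MeasureTheory.Integrable (fun x => Real.log ((μ.rnDeriv ν x).toReal)) μ
  then ((∫ x, Real.log ((μ.rnDeriv ν x).toReal) ∂μ : ℝ) : EReal)
  else ⊤

/-- `G : P_φ(E) → ℝ` is differentiable at `μ` w.r.t. the set of directions `C`, with linear
functional derivative `g` (normalised by `∫ g dμ = 0`). -/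
def HasLFDerivWithinAt {E : Type*} [MeasurableSpace E] {φ : E → ℝ}
    (C : Set (Pphi E φ)) (G : Pphi E φ → ℝ) (μ : Pphi E φ) (g : E → ℝ) : Prop :=
  Measurable g ∧ (∀ μ' ∈ C, Integrable g μ'.m) ∧ (∫ x, g x ∂μ.m) = 0 ∧
  ∀ μ' ∈ C, Filter.Tendsto (fun ε : ℝ => ε⁻¹ * (G (μ.comb μ' ε) - G μ)) (𝓝[>] (0:ℝ))
    (𝓝 (∫ x, g x ∂μ'.m - ∫ x, g x ∂μ.m))

/-- Variant of `HasLFDerivWithinAt` for `(−∞,+∞]`-valued functionals (finite on the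
direction set). -/
def HasLFDerivWithinAtE {E : Type*} [MeasurableSpace E] {φ : E → ℝ}
    (C : Set (Pphi E φ)) (G : Pphi E φ → EReal) (μ : Pphi E φ) (g : E → ℝ) : Prop :=
  Measurable g ∧ (∀ μ' ∈ C, Integrable g μ'.m) ∧ (∫ x, g x ∂μ.m) = 0 ∧
  ∀ μ' ∈ C, Filter.Tendsto
    (fun ε : ℝ => ε⁻¹ * ((G (μ.comb μ' ε)).toReal - (G μ).toReal)) (𝓝[>] (0:ℝ))
    (𝓝 (∫ x, g x ∂μ'.m - ∫ x, g x ∂μ.m))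

/-!
The minimiser `μ̄_ε` is the Gibbs measure `∝ e^U ν` with `U = -ζ̄_ε - ∫ DΨ_t(μ̄_ε) dλ_ε(t)`, so
`log (dμ̄_0/dμ̄_ε) = log (dμ̄_0/dν) - U + const`, which gives the Pythagorean identity
`H(μ̄_0|μ̄_ε) = H(μ̄_0|ν) - H(μ̄_ε|ν) + ∫ U dμ̄_ε - ∫ U dμ̄_0`.
The `ζ̄_ε`-part of `U` integrates to `0` under both measures and the `DΨ`-part to `0` under `μ̄_ε`.
Under `μ̄_0` the `DΨ`-part is `≤ 0`: `λ_ε` charges only active constraints `Ψ_t(μ̄_ε) = ε`, where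
convexity gives `∫ DΨ_t(μ̄_ε) dμ̄_0 ≤ Ψ_t(μ̄_0) - Ψ_t(μ̄_ε) ≤ -ε`.
Hence `H(μ̄_0|μ̄_ε) ≤ Ī_0 - Ī_ε ≤ C_stab ε`.
-/

section RelativeEntropy

variable {E : Type*} [MeasurableSpace E] {μ₀ μ ν : Measure E}

lemma relEnt_of_integrable_llr (hμν : μ ≪ ν) (h : Integrable (llr μ ν) μ) :
    relEnt μ ν = ((∫ x, llr μ ν x ∂μ : ℝ) : EReal) := by
  rw [relEnt, if_pos ⟨hμν, h⟩]
  rfl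

lemma absolutelyContinuous_and_integrable_llr_of_relEnt_lt_top (h : relEnt μ ν < ⊤) :
    μ ≪ ν ∧ Integrable (llr μ ν) μ := by
  unfold relEnt at h
  split_ifs at h with hc
  · exact hc
  · exact absurd h (lt_irrefl _)

lemma relEnt_eq_integral_of_llr_ae_eq {f : E → ℝ} (hμν : μ ≪ ν) (hf : llr μ ν =ᵐ[μ] f)
    (hint : Integrable f μ) : relEnt μ ν = ((∫ x, f x ∂μ : ℝ) : EReal) := by
  rw [relEnt_of_integrable_llr hμν ((integrable_congr hf).2 hint), integral_congr_ae hf]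

lemma llr_ae_eq_llr_sub_llr [SigmaFinite μ₀] [SigmaFinite μ] [SigmaFinite ν]
    (h₀ : μ₀ ≪ μ) (h : μ ≪ ν) : llr μ₀ μ =ᵐ[μ₀] fun x => llr μ₀ ν x - llr μ ν x := by
  filter_upwards [(h₀.trans h).ae_le (Measure.rnDeriv_mul_rnDeriv h₀ (κ := ν)),
    Measure.rnDeriv_pos h₀, h₀.ae_le (Measure.rnDeriv_lt_top μ₀ μ),
    h₀.ae_le (Measure.rnDeriv_pos h), (h₀.trans h).ae_le (Measure.rnDeriv_lt_top μ ν)]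
    with x hmul h₀pos h₀top hpos htop
  simp only [llr_def]
  rw [← hmul, Pi.mul_apply, ENNReal.toReal_mul,
    Real.log_mul (ENNReal.toReal_pos h₀pos.ne' h₀top.ne).ne'
      (ENNReal.toReal_pos hpos.ne' htop.ne).ne']
  ring

end RelativeEntropy

section Density

variable {E : Type*} [MeasurableSpace E] {μ₀ μ ν : Measure E}

lemma AEMeasurable.exists_null_aemeasurable_restrict_compl {β : Type*} [MeasurableSpace β]
    {f : E → β} (hf : AEMeasurable f μ) (ν : Measure E) :
    ∃ N, MeasurableSet N ∧ μ N = 0 ∧ AEMeasurable f (ν.restrict Nᶜ) := by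
  refine ⟨toMeasurable μ {x | f x ≠ hf.mk f x}, measurableSet_toMeasurable _ _, ?_,
    hf.mk f, hf.measurable_mk, ?_⟩
  · rw [measure_toMeasurable]
    exact ae_iff.1 hf.ae_eq_mk
  · refine (ae_restrict_iff' (measurableSet_toMeasurable _ _).compl).2 (ae_of_all _ fun x hx => ?_)
    by_contra hne
    exact hx (subset_toMeasurable _ _ hne)

lemma absolutelyContinuous_withDensity_of_aemeasurable {f : E → ℝ≥0∞} (hμ₀ : μ₀ ≪ ν)
    (hf : AEMeasurable f μ₀) (hf₀ : ∀ᵐ x ∂ν, f x ≠ 0) : μ₀ ≪ ν.withDensity f := by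
  obtain ⟨N, hN, hμ₀N, hfN⟩ := hf.exists_null_aemeasurable_restrict_compl ν
  rw [← Measure.restrict_eq_self_of_ae_mem (measure_eq_zero_iff_ae_notMem.1 hμ₀N)]
  refine ((hμ₀.restrict _).trans (withDensity_absolutelyContinuous' hfN
    (ae_restrict_of_ae hf₀))).trans ?_
  rw [← restrict_withDensity hN.compl]
  exact Measure.restrict_le_self.absolutelyContinuous

/-- Only measurability of `f` with respect to `ν.withDensity f` is assumed, not with respect to
`ν`: the Gibbs potential is merely known to be integrable against the measures at hand. -/
lemma rnDeriv_withDensity_ae_eq_of_aemeasurable [SigmaFinite ν] {f : E → ℝ≥0∞}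
    (hf : AEMeasurable f (ν.withDensity f)) :
    (ν.withDensity f).rnDeriv ν =ᵐ[ν.withDensity f] f := by
  obtain ⟨N, hN, hμN, hfN⟩ := hf.exists_null_aemeasurable_restrict_compl ν
  have hNc : ∀ᵐ x ∂ν.withDensity f, x ∈ Nᶜ := measure_eq_zero_iff_ae_notMem.1 hμN
  have heq : ν.withDensity f = ν.withDensity (Nᶜ.indicator f) := by
    rw [withDensity_indicator hN.compl, ← restrict_withDensity hN.compl,
      Measure.restrict_eq_self_of_ae_mem hNc]
  have hrn := Measure.rnDeriv_withDensity₀ ν ((aemeasurable_indicator_iff hN.compl).2 hfN)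
  rw [← heq] at hrn
  filter_upwards [(withDensity_absolutelyContinuous ν f).ae_le hrn, hNc] with x hx hxN
  rw [hx, indicator_of_mem hxN]

end Density

section Gibbs

variable {E : Type*} [MeasurableSpace E] {μ₀ μ ν : Measure E} {S : Set E} {c : ℝ≥0∞}
  {U : E → ℝ}

lemma llr_gibbs_ae_eq [SigmaFinite ν] (hS : MeasurableSet S) (hc₀ : c ≠ 0) (hc : c ≠ ⊤)
    (hμ : μ = ν.withDensity (S.indicator fun y => c * ENNReal.ofReal (Real.exp (U y))))
    (hU : AEMeasurable U μ) : llr μ ν =ᵐ[μ] fun x => U x + Real.log c.toReal := by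
  subst hμ
  have hS' : ∀ᵐ x ∂ν.withDensity (S.indicator fun y => c * ENNReal.ofReal (Real.exp (U y))),
      x ∈ S := by
    rw [withDensity_indicator hS]
    exact (withDensity_absolutelyContinuous _ _).ae_le (ae_restrict_mem hS)
  filter_upwards [rnDeriv_withDensity_ae_eq_of_aemeasurable
      ((Real.measurable_exp.comp_aemeasurable hU).ennreal_ofReal.const_mul c |>.indicator hS),
    hS'] with x hx hxS
  simp only [llr_def]
  rw [hx, indicator_of_mem hxS, ENNReal.toReal_mul,
    ENNReal.toReal_ofReal (Real.exp_pos _).le,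
    Real.log_mul (ENNReal.toReal_pos hc₀ hc).ne' (Real.exp_ne_zero _), Real.log_exp, add_comm]

lemma absolutelyContinuous_gibbs (hS : MeasurableSet S) (hνS : ∀ᵐ x ∂ν, x ∈ S) (hc₀ : c ≠ 0)
    (hμ : μ = ν.withDensity (S.indicator fun y => c * ENNReal.ofReal (Real.exp (U y))))
    (hμ₀ : μ₀ ≪ ν) (hU : AEMeasurable U μ₀) : μ₀ ≪ μ := by
  subst hμ
  refine absolutelyContinuous_withDensity_of_aemeasurable hμ₀
    ((Real.measurable_exp.comp_aemeasurable hU).ennreal_ofReal.const_mul c |>.indicator hS) ?_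
  filter_upwards [hνS] with x hx
  rw [indicator_of_mem hx]
  exact mul_ne_zero hc₀ (ENNReal.ofReal_pos.2 (Real.exp_pos _)).ne'

lemma gibbs_const_ne_zero [NeZero μ]
    (hμ : μ = ν.withDensity (S.indicator fun y => c * ENNReal.ofReal (Real.exp (U y)))) :
    c ≠ 0 := by
  rintro rfl
  simp only [zero_mul, indicator_zero, withDensity_const, zero_smul] at hμ
  exact NeZero.ne μ hμ

lemma gibbs_const_ne_top [IsFiniteMeasure μ] (hS : MeasurableSet S) (hνS : ν S ≠ 0)
    (hμ : μ = ν.withDensity (S.indicator fun y => c * ENNReal.ofReal (Real.exp (U y)))) :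
    c ≠ ⊤ := by
  rintro rfl
  refine measure_ne_top μ S ?_
  rw [hμ, withDensity_apply _ hS, setLIntegral_congr_fun hS fun x hx => by
    rw [indicator_of_mem hx, ENNReal.top_mul (ENNReal.ofReal_pos.2 (Real.exp_pos _)).ne'],
    setLIntegral_const, ENNReal.top_mul hνS]

lemma relEnt_gibbs_left [SigmaFinite ν] [IsProbabilityMeasure μ] (hS : MeasurableSet S)
    (hc₀ : c ≠ 0) (hc : c ≠ ⊤)
    (hμ : μ = ν.withDensity (S.indicator fun y => c * ENNReal.ofReal (Real.exp (U y))))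
    (hU : Integrable U μ) :
    relEnt μ ν = ((∫ x, U x ∂μ + Real.log c.toReal : ℝ) : EReal) := by
  rw [relEnt_eq_integral_of_llr_ae_eq (hμ ▸ withDensity_absolutelyContinuous _ _)
    (llr_gibbs_ae_eq hS hc₀ hc hμ hU.aemeasurable) (hU.add (integrable_const _)),
    integral_add hU (integrable_const _), integral_const, probReal_univ, one_smul]

lemma relEnt_gibbs_right [SigmaFinite ν] [IsProbabilityMeasure μ₀] [IsProbabilityMeasure μ]
    (hS : MeasurableSet S) (hνS : ∀ᵐ x ∂ν, x ∈ S) (hc₀ : c ≠ 0) (hc : c ≠ ⊤)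
    (hμ : μ = ν.withDensity (S.indicator fun y => c * ENNReal.ofReal (Real.exp (U y))))
    (hμ₀ : μ₀ ≪ ν) (h₀ : Integrable (llr μ₀ ν) μ₀) (hU₀ : Integrable U μ₀)
    (hU : AEMeasurable U μ) :
    relEnt μ₀ μ = ((∫ x, llr μ₀ ν x ∂μ₀ - ∫ x, U x ∂μ₀ - Real.log c.toReal : ℝ) : EReal) := by
  have hac := absolutelyContinuous_gibbs hS hνS hc₀ hμ hμ₀ hU₀.aemeasurable
  have hllr : llr μ₀ μ =ᵐ[μ₀] fun x => llr μ₀ ν x - (U x + Real.log c.toReal) := by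
    filter_upwards [llr_ae_eq_llr_sub_llr hac (hμ ▸ withDensity_absolutelyContinuous _ _),
      hac.ae_le (llr_gibbs_ae_eq hS hc₀ hc hμ hU)] with x h₁ h₂
    rw [h₁, h₂]
  have hUc : Integrable (fun x => U x + Real.log c.toReal) μ₀ := hU₀.add (integrable_const _)
  rw [relEnt_eq_integral_of_llr_ae_eq hac hllr (h₀.sub hUc), integral_sub h₀ hUc,
    integral_add hU₀ (integrable_const _),
    integral_const, probReal_univ, one_smul, sub_add_eq_sub_sub]

lemma relEnt_gibbs_le [SigmaFinite ν] [IsProbabilityMeasure μ₀] [IsProbabilityMeasure μ]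
    (hS : MeasurableSet S) (hνS : ∀ᵐ x ∂ν, x ∈ S) (hc₀ : c ≠ 0) (hc : c ≠ ⊤)
    (hμ : μ = ν.withDensity (S.indicator fun y => c * ENNReal.ofReal (Real.exp (U y))))
    (hμ₀ : μ₀ ≪ ν) (h₀ : Integrable (llr μ₀ ν) μ₀) (hU₀ : Integrable U μ₀)
    (hU : Integrable U μ) (hUle : ∫ x, U x ∂μ ≤ ∫ x, U x ∂μ₀) {C : ℝ}
    (hC : relEnt μ₀ ν - relEnt μ ν ≤ C) : relEnt μ₀ μ ≤ C := by
  rw [relEnt_of_integrable_llr hμ₀ h₀, relEnt_gibbs_left hS hc₀ hc hμ hU, ← EReal.coe_sub,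
    EReal.coe_le_coe_iff] at hC
  rw [relEnt_gibbs_right hS hνS hc₀ hc hμ hμ₀ h₀ hU₀ hU.aemeasurable, EReal.coe_le_coe_iff]
  linarith

end Gibbs

lemma le_sub_of_tendsto_slope_of_convex {h : ℝ → ℝ} {a b L : ℝ}
    (hconv : ∀ e ∈ Ioc (0 : ℝ) 1, h e ≤ (1 - e) * a + e * b)
    (hlim : Tendsto (fun e => e⁻¹ * (h e - a)) (𝓝[>] 0) (𝓝 L)) : L ≤ b - a := by
  refine le_of_tendsto hlim ?_
  filter_upwards [Ioc_mem_nhdsGT one_pos] with e he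
  rw [inv_mul_le_iff₀ he.1]
  linarith [hconv e he]

lemma Pphi.integral_le_sub_of_convex {E : Type*} [MeasurableSpace E] {φ : E → ℝ}
    {G : Pphi E φ → ℝ} {g : E → ℝ} {μ μ' : Pphi E φ}
    (hconv : ∀ e ∈ Icc (0 : ℝ) 1, G (μ.comb μ' e) ≤ (1 - e) * G μ + e * G μ')
    (hg : ∫ x, g x ∂μ.m = 0)
    (hdiff : ∀ δ > (0 : ℝ), ∀ᶠ e in 𝓝[>] (0 : ℝ),
      |e⁻¹ * (G (μ.comb μ' e) - G μ) - (∫ x, g x ∂μ'.m - ∫ x, g x ∂μ.m)| < δ) :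
    ∫ x, g x ∂μ'.m ≤ G μ' - G μ := by
  have h := le_sub_of_tendsto_slope_of_convex (fun e he => hconv e (Ioc_subset_Icc_self he))
    (Metric.tendsto_nhds.2 hdiff)
  rwa [hg, sub_zero] at h

lemma Pphi.integrable_phi {E : Type*} [MeasurableSpace E] {φ : E → ℝ} (hφ : Measurable φ)
    (hφ₀ : ∀ x, 0 ≤ φ x) (μ : Pphi E φ) : Integrable φ μ.m :=
  ⟨hφ.aestronglyMeasurable, (hasFiniteIntegral_iff_ofReal (ae_of_all _ hφ₀)).2 μ.finInt⟩

section Fubini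

variable {T E : Type*} [MeasurableSpace T] [MeasurableSpace E] {ρ : Measure T}

lemma integrable_uncurry_of_abs_le [IsFiniteMeasure ρ] {μ : Measure E} {F : T → E → ℝ}
    (hF : Measurable (Function.uncurry F)) {w : E → ℝ} (hw : Integrable w μ)
    (hbd : ∀ t x, |F t x| ≤ w x) : Integrable (Function.uncurry F) (ρ.prod μ) :=
  ((integrable_const (1 : ℝ)).mul_prod hw).mono' hF.aestronglyMeasurable
    (ae_of_all _ fun p => by simpa [Real.norm_eq_abs, Function.uncurry_def] using hbd p.1 p.2)

lemma Pphi.integrable_uncurry_of_abs_le [IsFiniteMeasure ρ] {φ : E → ℝ} (hφ : Measurable φ)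
    (hφ₀ : ∀ x, 0 ≤ φ x) {F : T → E → ℝ} (hF : Measurable (Function.uncurry F)) {D : ℝ}
    (hbd : ∀ t x, |F t x| ≤ D * (1 + φ x)) (μ : Pphi E φ) :
    Integrable (Function.uncurry F) (ρ.prod μ.m) :=
  _root_.integrable_uncurry_of_abs_le hF
    (((integrable_const 1).add (Pphi.integrable_phi hφ hφ₀ μ)).const_mul D) hbd

lemma integral_neg_sub_integral [SFinite ρ] {μ : Measure E} [SFinite μ] {ζ : E → ℝ}
    {F : T → E → ℝ} (hζ : Integrable ζ μ) (hζ₀ : ∫ x, ζ x ∂μ = 0)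
    (hF : Integrable (Function.uncurry F) (ρ.prod μ)) :
    ∫ x, (- ζ x - ∫ t, F t x ∂ρ) ∂μ = - ∫ t, ∫ x, F t x ∂μ ∂ρ := by
  have hζ' : Integrable (fun x => - ζ x) μ := hζ.neg
  have hg : Integrable (fun x => ∫ t, F t x ∂ρ) μ := hF.integral_prod_right
  rw [integral_sub hζ' hg, integral_neg, hζ₀, integral_integral_swap hF,
    neg_zero, zero_sub]

end Fubini

theorem stmt13_general {E : Type*} [MetricSpace E]
    [MeasurableSpace E] [BorelSpace E]
    (φ : E → ℝ) (hφc : Continuous φ) (hφ0 : ∀ x, 0 ≤ φ x)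
    (ν : Measure E) [IsProbabilityMeasure ν]
    (T : Type*) [MetricSpace T] [CompactSpace T] [MeasurableSpace T] [BorelSpace T]
    (Ψ : T → Pphi E φ → ℝ)
    (hΨconv : ∀ t, ∀ μ μ' : Pphi E φ, ∀ ε ∈ Icc (0:ℝ) 1,
      Ψ t (μ.comb μ' ε) ≤ (1 - ε) * Ψ t μ + ε * Ψ t μ')
    -- here F ≡ 0, so I = H(·|ν) and D_I = {H(·|ν) < ∞}
    (DI : Set (Pphi E φ)) (hDI : DI = {μ | relEnt μ.m ν < ⊤})
    (Aζ : Set (Pphi E φ))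
    (AΨε : ℝ → Set (Pphi E φ)) (hAΨε : ∀ ε : ℝ, AΨε ε = {μ | ∀ t, Ψ t μ ≤ ε})
    (Ibar : ℝ → EReal) (hIbar : ∀ ε : ℝ, Ibar ε = ⨅ μ ∈ DI ∩ (Aζ ∩ AΨε ε), relEnt μ.m ν)
    (εstar : ℝ)
    -- regularity of the constraints at every admissible point of the ε*-relaxed problem
    (DΨ : T → Pphi E φ → E → ℝ)
    (hDΨmeas : ∀ t, ∀ μbar ∈ DI ∩ (Aζ ∩ AΨε εstar), Measurable (DΨ t μbar))
    (hDΨnorm : ∀ t, ∀ μbar ∈ DI ∩ (Aζ ∩ AΨε εstar), (∫ x, DΨ t μbar x ∂μbar.m) = 0)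
    (hΨdiff : ∀ μbar ∈ DI ∩ (Aζ ∩ AΨε εstar), ∀ μ' : Pphi E φ, ∀ δ > (0:ℝ),
      ∀ᶠ ε in 𝓝[>] (0:ℝ), ∀ t,
      |ε⁻¹ * (Ψ t (μbar.comb μ' ε) - Ψ t μbar) -
        ((∫ x, DΨ t μbar x ∂μ'.m) - ∫ x, DΨ t μbar x ∂μbar.m)| < δ)
    (hDΨtcont : ∀ μbar ∈ DI ∩ (Aζ ∩ AΨε εstar), ∀ x : E,
      Continuous fun t => DΨ t μbar x)
    (hDΨbd : ∀ μbar ∈ DI ∩ (Aζ ∩ AΨε εstar), ∃ D : ℝ, 0 ≤ D ∧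
      ∀ t x, |DΨ t μbar x| ≤ D * (1 + φ x))
    -- the family of unique minimisers and the Gibbs data
    (μbar : ℝ → Pphi E φ) (ζbar : ℝ → E → ℝ) (lam : ℝ → Measure T) (Sbar : ℝ → Set E)
    (hminim : ∀ ε ∈ Icc (0:ℝ) εstar,
      μbar ε ∈ DI ∩ (Aζ ∩ AΨε ε) ∧
      (∀ μ ∈ DI ∩ (Aζ ∩ AΨε ε), relEnt (μbar ε).m ν ≤ relEnt μ.m ν) ∧
      (∀ μ ∈ DI ∩ (Aζ ∩ AΨε ε), relEnt μ.m ν = relEnt (μbar ε).m ν → μ = μbar ε))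
    (hGibbsData : ∀ ε ∈ Icc (0:ℝ) εstar,
      IsFiniteMeasure (lam ε) ∧ MeasurableSet (Sbar ε) ∧ (μbar ε).m (Sbar ε) = 1 ∧
      Integrable (ζbar ε) (μbar ε).m ∧
      (μbar ε).m = ν.withDensity (fun x => (Sbar ε).indicator (fun y =>
        (∫⁻ x' in Sbar ε, ENNReal.ofReal (Real.exp (- ζbar ε x' -
          ∫ t, DΨ t (μbar ε) x' ∂(lam ε))) ∂ν)⁻¹ *
        ENNReal.ofReal (Real.exp (- ζbar ε y -
          ∫ t, DΨ t (μbar ε) y ∂(lam ε)))) x) ∧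
      (∀ᵐ t ∂(lam ε), Ψ t (μbar ε) = ε) ∧
      -- the Gibbs-form support and orthogonality conditions
      ν (Sbar ε) = 1 ∧ (∀ μ ∈ Aζ, Integrable (ζbar ε) μ.m ∧ (∫ x, ζbar ε x ∂μ.m) = 0)) :
    -- conclusion: for any constant C_stab realising the stability estimate,
    -- `H(μ̄_0 | μ̄_ε) ≤ C_stab ε`.
    ∀ Cstab : ℝ, 0 ≤ Cstab →
      (∀ ε ∈ Icc (0:ℝ) εstar,
        (0 : EReal) ≤ Ibar 0 - Ibar ε ∧ Ibar 0 - Ibar ε ≤ ((Cstab * ε : ℝ) : EReal)) →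
      ∀ ε ∈ Icc (0:ℝ) εstar,
        relEnt (μbar 0).m (μbar ε).m ≤ ((Cstab * ε : ℝ) : EReal) := by
  intro Cstab _ hstab ε hε
  have h0 : (0 : ℝ) ∈ Icc 0 εstar := ⟨le_rfl, hε.1.trans hε.2⟩
  have hIbar_eq : ∀ ε' ∈ Icc (0 : ℝ) εstar, Ibar ε' = relEnt (μbar ε').m ν := fun ε' hε' =>
    (hIbar ε').trans (le_antisymm (iInf₂_le _ (hminim ε' hε').1) (le_iInf₂ (hminim ε' hε').2.1))
  obtain ⟨⟨h0DI, h0Aζ, h0Ψ⟩, -, -⟩ := hminim 0 h0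
  obtain ⟨⟨hεDI, hεAζ, hεΨ⟩, -, -⟩ := hminim ε hε
  obtain ⟨_, hS, -, -, hdens, hΨε, hνS, hζ⟩ := hGibbsData ε hε
  simp only [hAΨε, mem_ofPred_eq] at h0Ψ hεΨ
  have hstar : μbar ε ∈ DI ∩ (Aζ ∩ AΨε εstar) :=
    ⟨hεDI, hεAζ, (hAΨε εstar).symm ▸ fun t => (hεΨ t).trans hε.2⟩
  obtain ⟨D, -, hD⟩ := hDΨbd _ hstar
  have hF := Pphi.integrable_uncurry_of_abs_le (ρ := lam ε) hφc.measurable hφ0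
    (measurable_uncurry_of_continuous_of_measurable (hDΨtcont _ hstar)
      fun t => hDΨmeas t _ hstar) hD
  have hactive (t : T) (ht : Ψ t (μbar ε) = ε) : ∫ x, DΨ t (μbar ε) x ∂(μbar 0).m ≤ 0 := by
    have h := Pphi.integral_le_sub_of_convex (hΨconv t _ _) (hDΨnorm t _ hstar)
      fun δ hδ => (hΨdiff _ hstar (μbar 0) δ hδ).mono fun e he => he t
    linarith [h0Ψ t, hε.1]
  obtain ⟨hac0, hint0⟩ := absolutelyContinuous_and_integrable_llr_of_relEnt_lt_top
    (by rwa [hDI] at h0DI)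
  have hC := (hstab ε hε).2
  rw [hIbar_eq 0 h0, hIbar_eq ε hε] at hC
  refine relEnt_gibbs_le hS ((ae_mem_iff_measure_eq hS.nullMeasurableSet).2 (by simp [hνS]))
    (gibbs_const_ne_zero hdens) (gibbs_const_ne_top hS (by simp [hνS]) hdens) hdens hac0 hint0
    ((hζ _ h0Aζ).1.neg.sub (hF _).integral_prod_right)
    ((hζ _ hεAζ).1.neg.sub (hF _).integral_prod_right) ?_ hC
  rw [integral_neg_sub_integral (hζ _ h0Aζ).1 (hζ _ h0Aζ).2 (hF _),
    integral_neg_sub_integral (hζ _ hεAζ).1 (hζ _ hεAζ).2 (hF _), neg_le_neg_iff]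
  simp only [hDΨnorm _ _ hstar, integral_zero]
  exact integral_nonpos_of_ae (hΨε.mono hactive)

/-- quantitative stability of the entropic minimisers, case `F ≡ 0`:
in the setting of the quantitative stability result with `F ≡ 0`, the unique minimisers
`μ̄_0` and `μ̄_ε` satisfy `H(μ̄_0|μ̄_ε) ≤ C_stab ε`, for the constant `C_stab` of the
estimate `0 ≤ Ī^ζ_{Ψ,0} − Ī^ζ_{Ψ,ε} ≤ C_stab ε`. -/
theorem stmt13 {E : Type*} [MetricSpace E] [CompleteSpace E]
    [TopologicalSpace.SeparableSpace E] [MeasurableSpace E] [BorelSpace E]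
    (φ : E → ℝ) (hφc : Continuous φ) (hφ0 : ∀ x, 0 ≤ φ x)
    (ν : Measure E) [IsProbabilityMeasure ν]
    (hexp : ∀ α : ℝ, 0 < α → ∫⁻ x, ENNReal.ofReal (Real.exp (α * φ x)) ∂ν < ⊤)
    (S : Type*) (ζ : S → E → ℝ) (hζc : ∀ s, Continuous (ζ s))
    (Cζ : S → ℝ) (hCζ : ∀ s, 0 ≤ Cζ s) (hζb : ∀ s x, |ζ s x| ≤ Cζ s * (1 + φ x))
    (T : Type*) [MetricSpace T] [CompactSpace T] [MeasurableSpace T] [BorelSpace T]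
    (Ψ : T → Pphi E φ → ℝ) (hΨlsc : ∀ t, LowerSemicontinuous (Ψ t))
    (hΨconv : ∀ t, ∀ μ μ' : Pphi E φ, ∀ ε ∈ Icc (0:ℝ) 1,
      Ψ t (μ.comb μ' ε) ≤ (1 - ε) * Ψ t μ + ε * Ψ t μ')
    -- here F ≡ 0, so I = H(·|ν) and D_I = {H(·|ν) < ∞}
    (DI : Set (Pphi E φ)) (hDI : DI = {μ | relEnt μ.m ν < ⊤})
    (Aζ : Set (Pphi E φ)) (hAζ : Aζ = {μ | ∀ s, (∫ x, ζ s x ∂μ.m) = 0})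
    (hΨtmeas : ∀ μ ∈ Aζ, Measurable fun t => Ψ t μ)
    (AΨε : ℝ → Set (Pphi E φ)) (hAΨε : ∀ ε : ℝ, AΨε ε = {μ | ∀ t, Ψ t μ ≤ ε})
    (Ibar : ℝ → EReal) (hIbar : ∀ ε : ℝ, Ibar ε = ⨅ μ ∈ DI ∩ (Aζ ∩ AΨε ε), relEnt μ.m ν)
    (εstar : ℝ) (hεstar : 0 < εstar)
    -- regularity of the constraints at every admissible point of the ε*-relaxed problem
    (DΨ : T → Pphi E φ → E → ℝ)
    (hΨtcont : ∀ μbar ∈ DI ∩ (Aζ ∩ AΨε εstar), Continuous fun t => Ψ t μbar)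
    (hDΨmeas : ∀ t, ∀ μbar ∈ DI ∩ (Aζ ∩ AΨε εstar), Measurable (DΨ t μbar))
    (hDΨint : ∀ t, ∀ μbar ∈ DI ∩ (Aζ ∩ AΨε εstar), ∀ μ' : Pphi E φ,
      Integrable (DΨ t μbar) μ'.m)
    (hDΨnorm : ∀ t, ∀ μbar ∈ DI ∩ (Aζ ∩ AΨε εstar), (∫ x, DΨ t μbar x ∂μbar.m) = 0)
    (hΨdiff : ∀ μbar ∈ DI ∩ (Aζ ∩ AΨε εstar), ∀ μ' : Pphi E φ, ∀ δ > (0:ℝ),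
      ∀ᶠ ε in 𝓝[>] (0:ℝ), ∀ t,
      |ε⁻¹ * (Ψ t (μbar.comb μ' ε) - Ψ t μbar) -
        ((∫ x, DΨ t μbar x ∂μ'.m) - ∫ x, DΨ t μbar x ∂μbar.m)| < δ)
    (hDΨtcont : ∀ μbar ∈ DI ∩ (Aζ ∩ AΨε εstar), ∀ x : E,
      Continuous fun t => DΨ t μbar x)
    (hDΨbd : ∀ μbar ∈ DI ∩ (Aζ ∩ AΨε εstar), ∃ D : ℝ, 0 ≤ D ∧
      ∀ t x, |DΨ t μbar x| ≤ D * (1 + φ x))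
    -- qualification
    (μtilde : Pphi E φ) (hμtilde : μtilde ∈ DI ∩ Aζ) (hμtneg : ∀ t, Ψ t μtilde < 0)
    -- the family of unique minimisers and the Gibbs data
    (μbar : ℝ → Pphi E φ) (ζbar : ℝ → E → ℝ) (lam : ℝ → Measure T) (Sbar : ℝ → Set E)
    (hminim : ∀ ε ∈ Icc (0:ℝ) εstar,
      μbar ε ∈ DI ∩ (Aζ ∩ AΨε ε) ∧
      (∀ μ ∈ DI ∩ (Aζ ∩ AΨε ε), relEnt (μbar ε).m ν ≤ relEnt μ.m ν) ∧
      (∀ μ ∈ DI ∩ (Aζ ∩ AΨε ε), relEnt μ.m ν = relEnt (μbar ε).m ν → μ = μbar ε))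
    (hGibbsData : ∀ ε ∈ Icc (0:ℝ) εstar,
      IsFiniteMeasure (lam ε) ∧ MeasurableSet (Sbar ε) ∧ (μbar ε).m (Sbar ε) = 1 ∧
      Integrable (ζbar ε) (μbar ε).m ∧
      (μbar ε).m = ν.withDensity (fun x => (Sbar ε).indicator (fun y =>
        (∫⁻ x' in Sbar ε, ENNReal.ofReal (Real.exp (- ζbar ε x' -
          ∫ t, DΨ t (μbar ε) x' ∂(lam ε))) ∂ν)⁻¹ *
        ENNReal.ofReal (Real.exp (- ζbar ε y -
          ∫ t, DΨ t (μbar ε) y ∂(lam ε)))) x) ∧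
      (∀ᵐ t ∂(lam ε), Ψ t (μbar ε) = ε) ∧
      -- the Gibbs-form support and orthogonality conditions
      ν (Sbar ε) = 1 ∧ (∀ μ ∈ Aζ, Integrable (ζbar ε) μ.m ∧ (∫ x, ζbar ε x ∂μ.m) = 0)) :
    -- conclusion: for any constant C_stab realising the stability estimate,
    -- `H(μ̄_0 | μ̄_ε) ≤ C_stab ε`.
    ∀ Cstab : ℝ, 0 ≤ Cstab →
      (∀ ε ∈ Icc (0:ℝ) εstar,
        (0 : EReal) ≤ Ibar 0 - Ibar ε ∧ Ibar 0 - Ibar ε ≤ ((Cstab * ε : ℝ) : EReal)) →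
      ∀ ε ∈ Icc (0:ℝ) εstar,
        relEnt (μbar 0).m (μbar ε).m ≤ ((Cstab * ε : ℝ) : EReal) :=
  stmt13_general φ hφc hφ0 ν T Ψ hΨconv DI hDI Aζ AΨε hAΨε Ibar hIbar εstar DΨ hDΨmeas hDΨnorm
    hΨdiff hDΨtcont hDΨbd μbar ζbar lam Sbar hminim hGibbsData
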